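/- Let X be a normed space of dimension at least 2 and let δ be its modulus of convexity, δ(ε) = inf{1 − ‖(x+y)/2‖ : ‖x‖ ≤ 1, ‖y‖ ≤ 1, ‖x−y‖ ≥ ε}. Then the infimum defining δ(ε) is unchanged if it is restricted to x, y with ‖x‖ = ‖y‖ = 1. -/

import Mathlib

open NormedSpace

/-- The modulus of convexity of a normed space. -/
noncomputable def modConv (X : Type*) [NormedAddCommGroup X] (ε : ℝ) : ℝ :=
  sInf {d : ℝ | ∃ x y : X, ‖x‖ ≤ 1 ∧ ‖y‖ ≤ 1 ∧ ε ≤ ‖x - y‖ ∧ d = 1 - ‖x + y‖ / 2}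

lemma ker_vec {X : Type*} [NormedAddCommGroup X] [NormedSpace ℝ X]
    (hdim : 2 ≤ Module.rank ℝ X) (f : StrongDual ℝ X) : ∃ v : X, v ≠ 0 ∧ f v = 0 := by
  by_contra h
  push_neg at h
  have hinj : Function.Injective (f : X →ₗ[ℝ] ℝ) := by
    intro a b hab
    have hab' : f (a - b) = 0 := by
      simp only [map_sub]
      simpa [sub_eq_zero] using hab
    by_contra hne
    exact h (a - b) (sub_ne_zero.2 hne) hab'
  have hle := LinearMap.lift_rank_le_of_injective ((f : X →ₗ[ℝ] ℝ)) hinj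
  rw [Module.rank_self, Cardinal.lift_one] at hle
  have h2 : Cardinal.lift.{0} (2 : Cardinal) ≤ Cardinal.lift.{0} (Module.rank ℝ X) :=
    Cardinal.lift_le.2 hdim
  rw [Cardinal.lift_ofNat] at h2
  have hfin := h2.trans hle
  norm_num at hfin

/-- One-step normalization: move `y` to the unit sphere without decreasing
`‖x - y‖` or `‖x + y‖`. -/
lemma step {X : Type*} [NormedAddCommGroup X] [NormedSpace ℝ X]
    (hdim : 2 ≤ Module.rank ℝ X) (x y : X) (hy : ‖y‖ ≤ 1)
    (hs : x + y ≠ 0) : ∃ y' : X, ‖y'‖ = 1 ∧ ‖x - y‖ ≤ ‖x - y'‖ ∧ ‖x + y‖ ≤ ‖x + y'‖ := by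
  obtain ⟨f, hf1, hfx0⟩ := exists_dual_vector ℝ (x + y) (norm_ne_zero_iff.2 hs)
  have hfx : f (x + y) = ‖x + y‖ := by exact_mod_cast hfx0
  -- a norming functional for x - y, or 0 if x - y = 0
  obtain ⟨g, hg1, hgx⟩ : ∃ g : StrongDual ℝ X, ‖g‖ ≤ 1 ∧ g (x - y) = ‖x - y‖ := by
    rcases eq_or_ne (x - y) 0 with h | h
    · exact ⟨0, by simp, by simp [h]⟩
    · obtain ⟨g, hg1, hgx⟩ := exists_dual_vector ℝ (x - y) (norm_ne_zero_iff.2 h)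
      exact ⟨g, hg1.le, by exact_mod_cast hgx⟩
  obtain ⟨v0, hv0, hfv0⟩ := ker_vec hdim f
  obtain ⟨v, hv, hfv, hgv⟩ : ∃ v : X, v ≠ 0 ∧ f v = 0 ∧ g v ≤ 0 := by
    rcases le_or_gt (g v0) 0 with h | h
    · exact ⟨v0, hv0, hfv0, h⟩
    · exact ⟨-v0, neg_ne_zero.2 hv0, by simp [hfv0], by simp; linarith⟩
  have hvpos : (0:ℝ) < ‖v‖ := norm_pos_iff.2 hv
  -- find t ≥ 0 with ‖y + t • v‖ = 1
  obtain ⟨t, ht, hty⟩ : ∃ t : ℝ, 0 ≤ t ∧ ‖y + t • v‖ = 1 := by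
    set T : ℝ := (1 + ‖y‖) / ‖v‖ with hT
    have hT0 : 0 ≤ T := div_nonneg (by positivity) hvpos.le
    have hcont : ContinuousOn (fun t : ℝ => ‖y + t • v‖) (Set.Icc 0 T) := by
      fun_prop
    have h0 : ‖y + (0:ℝ) • v‖ ≤ 1 := by simpa using hy
    have hT1 : 1 ≤ ‖y + T • v‖ := by
      have h1 : ‖T • v‖ ≤ ‖y + T • v‖ + ‖y‖ := by
        calc ‖T • v‖ = ‖(y + T • v) - y‖ := by rw [add_sub_cancel_left]
          _ ≤ ‖y + T • v‖ + ‖y‖ := norm_sub_le _ _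
      have h2 : ‖T • v‖ = 1 + ‖y‖ := by
        rw [norm_smul, Real.norm_eq_abs, abs_of_nonneg hT0, hT, div_mul_cancel₀]
        exact hvpos.ne'
      linarith
    have := intermediate_value_Icc hT0 hcont
    have hmem : (1:ℝ) ∈ Set.Icc ‖y + (0:ℝ) • v‖ ‖y + T • v‖ := ⟨h0, hT1⟩
    obtain ⟨t, htmem, htval⟩ := this hmem
    exact ⟨t, htmem.1, htval⟩
  refine ⟨y + t • v, hty, ?_, ?_⟩
  · -- ‖x - y‖ ≤ ‖x - (y + t•v)‖ via g
    have h1 : g (x - (y + t • v)) ≤ ‖x - (y + t • v)‖ := by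
      calc g (x - (y + t • v)) ≤ ‖g (x - (y + t • v))‖ := le_abs_self _
        _ ≤ ‖g‖ * ‖x - (y + t • v)‖ := g.le_opNorm _
        _ ≤ 1 * ‖x - (y + t • v)‖ := by
            apply mul_le_mul_of_nonneg_right hg1 (norm_nonneg _)
        _ = _ := one_mul _
    have h2 : g (x - (y + t • v)) = ‖x - y‖ - t * g v := by
      have : x - (y + t • v) = (x - y) - t • v := by abel
      rw [this, map_sub, hgx, map_smul, smul_eq_mul]
    nlinarith [mul_nonneg ht (neg_nonneg.2 hgv)]
  · have h1 : f (x + (y + t • v)) ≤ ‖x + (y + t • v)‖ := by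
      calc f (x + (y + t • v)) ≤ ‖f (x + (y + t • v))‖ := le_abs_self _
        _ ≤ ‖f‖ * ‖x + (y + t • v)‖ := f.le_opNorm _
        _ = ‖x + (y + t • v)‖ := by rw [hf1, one_mul]
    have h2 : f (x + (y + t • v)) = ‖x + y‖ := by
      have : x + (y + t • v) = (x + y) + t • v := by abel
      rw [this, map_add, hfx, map_smul, smul_eq_mul, hfv, mul_zero, add_zero]
    linarith

/-- Pair normalization. -/
lemma pair {X : Type*} [NormedAddCommGroup X] [NormedSpace ℝ X]
    (hdim : 2 ≤ Module.rank ℝ X) (x y : X) (hx : ‖x‖ ≤ 1) (hy : ‖y‖ ≤ 1) :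
    ∃ u v : X, ‖u‖ = 1 ∧ ‖v‖ = 1 ∧ ‖x - y‖ ≤ ‖u - v‖ ∧ ‖x + y‖ ≤ ‖u + v‖ := by
  have hnt : Nontrivial X := by
    rw [← rank_pos_iff_nontrivial (R := ℝ)]
    calc (0:Cardinal) < 2 := by norm_num
      _ ≤ _ := hdim
  obtain ⟨w0, hw0⟩ := exists_ne (0 : X)
  set w : X := ‖w0‖⁻¹ • w0 with hwdef
  have hw : ‖w‖ = 1 := by
    rw [hwdef, norm_smul, Real.norm_eq_abs, abs_of_nonneg (by positivity),
      inv_mul_cancel₀ (norm_ne_zero_iff.2 hw0)]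
  rcases eq_or_ne (x + y) 0 with hs | hs
  · -- x + y = 0 : take (w, -w)
    refine ⟨w, -w, hw, by simpa using hw, ?_, ?_⟩
    · have : ‖x - y‖ ≤ 2 := by
        calc ‖x - y‖ ≤ ‖x‖ + ‖y‖ := norm_sub_le _ _
          _ ≤ 2 := by linarith
      have : ‖w - -w‖ = 2 := by
        rw [sub_neg_eq_add, ← two_smul ℝ w, norm_smul]
        simp [hw]
      linarith [‹‖x - y‖ ≤ 2›]
    · simp [hs]
  · obtain ⟨y', hy'1, hy'd, hy's⟩ := step hdim x y hy hs
    have hs' : y' + x ≠ 0 := by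
      intro h
      rw [add_comm] at h
      rw [h, norm_zero] at hy's
      exact hs (by
        have : ‖x + y‖ ≤ 0 := hy's
        exact norm_le_zero_iff.1 this)
    obtain ⟨x', hx'1, hx'd, hx's⟩ := step hdim y' x hx hs'
    refine ⟨x', y', hx'1, hy'1, ?_, ?_⟩
    · calc ‖x - y‖ ≤ ‖x - y'‖ := hy'd
        _ = ‖y' - x‖ := (norm_sub_rev _ _).symm
        _ ≤ ‖y' - x'‖ := hx'd
        _ = ‖x' - y'‖ := norm_sub_rev _ _
    · calc ‖x + y‖ ≤ ‖x + y'‖ := hy's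
        _ = ‖y' + x‖ := by rw [add_comm]
        _ ≤ ‖y' + x'‖ := hx's
        _ = ‖x' + y'‖ := by rw [add_comm]

theorem stmt18 (X : Type*) [NormedAddCommGroup X] [NormedSpace ℝ X]
    (hdim : 2 ≤ Module.rank ℝ X) :
    ∀ ε ∈ Set.Icc (0 : ℝ) 2,
      modConv X ε =
        sInf {d : ℝ | ∃ x y : X, ‖x‖ = 1 ∧ ‖y‖ = 1 ∧ ε ≤ ‖x - y‖ ∧ d = 1 - ‖x + y‖ / 2} := by
  intro ε hε
  obtain ⟨hε0, hε2⟩ := hε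
  set A := {d : ℝ | ∃ x y : X, ‖x‖ ≤ 1 ∧ ‖y‖ ≤ 1 ∧ ε ≤ ‖x - y‖ ∧ d = 1 - ‖x + y‖ / 2} with hA
  set B := {d : ℝ | ∃ x y : X, ‖x‖ = 1 ∧ ‖y‖ = 1 ∧ ε ≤ ‖x - y‖ ∧ d = 1 - ‖x + y‖ / 2} with hB
  have hnt : Nontrivial X := by
    rw [← rank_pos_iff_nontrivial (R := ℝ)]
    calc (0:Cardinal) < 2 := by norm_num
      _ ≤ _ := hdim
  obtain ⟨w0, hw0⟩ := exists_ne (0 : X)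
  set w : X := ‖w0‖⁻¹ • w0 with hwdef
  have hw : ‖w‖ = 1 := by
    rw [hwdef, norm_smul, Real.norm_eq_abs, abs_of_nonneg (by positivity),
      inv_mul_cancel₀ (norm_ne_zero_iff.2 hw0)]
  have hB1 : (1:ℝ) ∈ B := by
    refine ⟨w, -w, hw, by simpa using hw, ?_, by simp⟩
    have : ‖w - -w‖ = 2 := by
      rw [sub_neg_eq_add, ← two_smul ℝ w, norm_smul]
      simp [hw]
    rw [this]; exact hε2
  have hBA : B ⊆ A := by
    rintro d ⟨x, y, hx, hy, h1, h2⟩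
    exact ⟨x, y, hx.le, hy.le, h1, h2⟩
  have hbddA : BddBelow A := by
    refine ⟨0, ?_⟩
    rintro d ⟨x, y, hx, hy, _, rfl⟩
    have : ‖x + y‖ ≤ 2 := by
      calc ‖x + y‖ ≤ ‖x‖ + ‖y‖ := norm_add_le _ _
        _ ≤ 2 := by linarith
    linarith
  have hbddB : BddBelow B := hbddA.mono hBA
  show sInf A = sInf B
  apply le_antisymm
  · exact csInf_le_csInf hbddA ⟨1, hB1⟩ hBA
  · apply le_csInf ⟨1, hBA hB1⟩
    rintro a ⟨x, y, hx, hy, hεxy, rfl⟩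
    obtain ⟨u, v, hu, hv, hd, hs⟩ := pair hdim x y hx hy
    calc sInf B ≤ 1 - ‖u + v‖ / 2 := csInf_le hbddB ⟨u, v, hu, hv, hεxy.trans hd, rfl⟩
      _ ≤ 1 - ‖x + y‖ / 2 := by linarith
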